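/- arXiv:0801.2444 — 3 statements merged into one kernel-verified Lean document; each statement's English description precedes it below -/
import Mathlib

section
/- Let R(G₂) = ℤ[ω₁,ω₂,y₃]/⟨g₂, r₃, r₆⟩, where g₂ = 3ω₁² − 3ω₁ω₂ + ω₂², r₃ = 2y₃ − ω₁³, and r₆ = y₃². Then R(G₂) is a free ℤ-module of rank 12 (the order of the Weyl group of G₂). -/
/-!
The relations are monic once they are read in the right order: y₃² = 0 over ℤ, then
ω₁³ = 2y₃ over ℤ[y₃]/(y₃²), then ω₂² − 3ω₁ω₂ + 3ω₁² = 0 over the resulting ring. So R(G₂) is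
an iterated `AdjoinRoot` of monic polynomials of degrees 2, 3, 2, and each step is free of rank
equal to the degree, giving rank 2 · 3 · 2 = 12 over ℤ by the tower law.
-/

open MvPolynomial

/-- The polynomial ring ℤ[ω₁,ω₂,y₃]: ω₁ = X 0, ω₂ = X 1, y₃ = X 2. -/
noncomputable abbrev G2Poly : Type := MvPolynomial (Fin 3) ℤ

/-- The Schubert presentation R(G₂) = ℤ[ω₁,ω₂,y₃]/⟨g₂, r₃, r₆⟩. -/
noncomputable abbrev RG2 : Type :=
  G2Poly ⧸ Ideal.span
    ({ 3 * X 0 ^ 2 - 3 * X 0 * X 1 + X 1 ^ 2,   -- g₂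
       2 * X 2 - X 0 ^ 3,                        -- r₃
       X 2 ^ 2 } :                               -- r₆
      Set G2Poly)

theorem Polynomial.Monic.finrank_adjoinRoot {R : Type*} [CommRing R] [StrongRankCondition R]
    {g : Polynomial R} (hg : g.Monic) : Module.finrank R (AdjoinRoot g) = g.natDegree :=
  finrank_quotient_span_eq_natDegree' hg

theorem Polynomial.Monic.nontrivial_adjoinRoot {R : Type*} [CommRing R] [Nontrivial R]
    {g : Polynomial R} (hg : g.Monic) (hd : 0 < g.natDegree) : Nontrivial (AdjoinRoot g) :=
  Module.nontrivial_of_finrank_pos (R := R) (hg.finrank_adjoinRoot ▸ hd)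

namespace RG2

open Polynomial AdjoinRoot Module

-- ℤ[y₃]/(y₃²), then ω₁ and ω₂ adjoined in turn.
abbrev RY : Type := AdjoinRoot (Polynomial.X ^ 2 : ℤ[X])

noncomputable def polyW₁ : RY[X] := Polynomial.X ^ 3 - Polynomial.C (2 * root _)

abbrev RYW₁ : Type := AdjoinRoot polyW₁

noncomputable def polyW₂ : RYW₁[X] :=
  Polynomial.X ^ 2 - Polynomial.C (3 * root polyW₁) * Polynomial.X
    + Polynomial.C (3 * root polyW₁ ^ 2)

abbrev RYW₁W₂ : Type := AdjoinRoot polyW₂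

lemma monic_polyW₁ : polyW₁.Monic := by unfold polyW₁; monicity!

lemma monic_polyW₂ : polyW₂.Monic := by unfold polyW₂; monicity!

instance : Nontrivial RY := (monic_X_pow 2).nontrivial_adjoinRoot (by simp)

lemma natDegree_polyW₁ : polyW₁.natDegree = 3 := by unfold polyW₁; compute_degree!

instance : Nontrivial RYW₁ :=
  monic_polyW₁.nontrivial_adjoinRoot (by rw [natDegree_polyW₁]; norm_num)

lemma natDegree_polyW₂ : polyW₂.natDegree = 2 := by unfold polyW₂; compute_degree!

instance : Module.Free ℤ RY := (monic_X_pow 2).free_adjoinRoot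
instance : Module.Finite ℤ RY := (monic_X_pow 2).finite_adjoinRoot
instance : Module.Free RY RYW₁ := monic_polyW₁.free_adjoinRoot
instance : Module.Finite RY RYW₁ := monic_polyW₁.finite_adjoinRoot
instance : Module.Free RYW₁ RYW₁W₂ := monic_polyW₂.free_adjoinRoot
instance : Module.Finite RYW₁ RYW₁W₂ := monic_polyW₂.finite_adjoinRoot
instance : Module.Free ℤ RYW₁ := .trans (S := RY)
instance : Module.Finite ℤ RYW₁ := .trans RY RYW₁
instance : Module.Free ℤ RYW₁W₂ := .trans (S := RYW₁)
instance : Module.Finite ℤ RYW₁W₂ := .trans RYW₁ RYW₁W₂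

lemma finrank_RYW₁W₂ : finrank ℤ RYW₁W₂ = 12 := by
  rw [← finrank_mul_finrank ℤ RYW₁ RYW₁W₂, ← finrank_mul_finrank ℤ RY RYW₁,
    (monic_X_pow 2).finrank_adjoinRoot, monic_polyW₁.finrank_adjoinRoot,
    monic_polyW₂.finrank_adjoinRoot, natDegree_X_pow, natDegree_polyW₁, natDegree_polyW₂]

noncomputable def y₃ : RYW₁W₂ := of polyW₂ (of polyW₁ (root _))
noncomputable def ω₁ : RYW₁W₂ := of polyW₂ (root polyW₁)
noncomputable def ω₂ : RYW₁W₂ := root polyW₂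

lemma y₃_sq : y₃ ^ 2 = 0 := by
  rw [y₃, ← map_pow, ← map_pow, ← mk_X, ← map_pow, mk_self, map_zero, map_zero]

lemma ω₁_cube : ω₁ ^ 3 = 2 * y₃ := by
  have h : AdjoinRoot.mk polyW₁ (Polynomial.X ^ 3 - Polynomial.C (2 * root _)) = 0 := mk_self
  replace h := congrArg (of polyW₂) h
  simp only [map_sub, map_pow, map_mul, map_ofNat, mk_X, mk_C, map_zero] at h
  rw [ω₁, y₃]
  linear_combination h

lemma ω₂_sq : ω₂ ^ 2 = 3 * ω₁ * ω₂ - 3 * ω₁ ^ 2 := by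
  have h : AdjoinRoot.mk polyW₂ (Polynomial.X ^ 2 - Polynomial.C (3 * root polyW₁) * Polynomial.X
      + Polynomial.C (3 * root polyW₁ ^ 2)) = 0 := mk_self
  simp only [map_sub, map_add, map_mul, map_pow, mk_X, mk_C, map_ofNat] at h
  rw [ω₁, ω₂]
  linear_combination h

noncomputable abbrev relators : Set G2Poly :=
  { 3 * X 0 ^ 2 - 3 * X 0 * X 1 + X 1 ^ 2, 2 * X 2 - X 0 ^ 3, X 2 ^ 2 }

noncomputable abbrev relations : Ideal G2Poly := Ideal.span relators

noncomputable abbrev gen (i : Fin 3) : RG2 := Ideal.Quotient.mk relations (X i)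

lemma mk_relator {p : G2Poly} (hp : p ∈ relators) : Ideal.Quotient.mk relations p = 0 :=
  Ideal.Quotient.eq_zero_iff_mem.2 (Ideal.subset_span hp)

lemma gen_two_sq : gen 2 ^ 2 = 0 := by
  rw [gen, ← map_pow]
  exact mk_relator (by simp)

lemma gen_zero_cube : gen 0 ^ 3 = 2 * gen 2 := by
  have h := mk_relator (p := 2 * X 2 - X 0 ^ 3) (by simp)
  simp only [map_sub, map_mul, map_pow, map_ofNat] at h
  linear_combination -h

lemma gen_one_sq : gen 1 ^ 2 = 3 * gen 0 * gen 1 - 3 * gen 0 ^ 2 := by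
  have h := mk_relator (p := 3 * X 0 ^ 2 - 3 * X 0 * X 1 + X 1 ^ 2) (by simp)
  simp only [map_sub, map_add, map_mul, map_pow, map_ofNat] at h
  linear_combination h

noncomputable def toTower : RG2 →+* RYW₁W₂ :=
  Ideal.Quotient.lift relations (eval₂Hom (Int.castRingHom _) ![ω₁, ω₂, y₃]) <| by
    refine fun p hp ↦ (Ideal.span_le (I := RingHom.ker _)).2 ?_ hp
    rintro _ (rfl | rfl | rfl) <;> simp [ω₂_sq, ω₁_cube, y₃_sq]

noncomputable def ofTower : RYW₁W₂ →+* RG2 :=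
  lift (lift (lift (Int.castRingHom RG2) (gen 2) (by simp [gen_two_sq]))
    (gen 0) (by simp [polyW₁, gen_zero_cube, map_ofNat])) (gen 1)
    (by simp [polyW₂, gen_one_sq, map_ofNat, Polynomial.eval₂_pow])

lemma ofTower_comp_toTower : ofTower.comp toTower = RingHom.id RG2 := by
  refine Ideal.Quotient.ringHom_ext (MvPolynomial.ringHom_ext (fun _ ↦ by simp) fun i ↦ ?_)
  fin_cases i <;> simp [toTower, ofTower, ω₁, ω₂, y₃]

lemma toTower_comp_ofTower : toTower.comp ofTower = RingHom.id RYW₁W₂ := by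
  ext <;> simp [toTower, ofTower, ω₁, ω₂, y₃]

noncomputable def equivTower : RG2 ≃+* RYW₁W₂ :=
  .ofRingHom toTower ofTower toTower_comp_ofTower ofTower_comp_toTower

end RG2

/-- R(G₂) is a free ℤ-module of rank 12 = |W(G₂)|. -/
theorem RG2_free_of_rank_twelve : Nonempty (RG2 ≃ₗ[ℤ] (Fin 12 → ℤ)) :=
  ⟨RG2.equivTower.toIntAlgEquiv.toLinearEquiv.trans <| .ofFinrankEq _ _ <| by
    rw [RG2.finrank_RYW₁W₂, Module.finrank_fin_fun]⟩
end

section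
/- Let ℤ[ω₁,…,ω₄] be the polynomial ring over ℤ and let C = (c_{ij}) be the Cartan matrix of F₄, with rows (2,−1,0,0), (−1,2,−2,0), (0,−1,2,−1), (0,0,−1,2). For 1 ≤ i ≤ 4 let σ_i be the ℤ-algebra endomorphism of ℤ[ω₁,…,ω₄] determined by σ_i(ω_k) = ω_k for k ≠ i and σ_i(ω_i) = ω_i − Σ_{j=1}^{4} c_{ij}ω_j. Then each of σ₂, σ₃, σ₄ permutes the set {t₁,…,t₆}; in particular σ_i(c_r) = c_r for every i ∈ {2,3,4} and 1 ≤ r ≤ 6. -/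
open MvPolynomial

noncomputable section

/-- ℤ[ω₁,…,ω₄], with ωᵢ = X (i−1). -/
abbrev F4W : Type := MvPolynomial (Fin 4) ℤ

/-- The Cartan matrix of F₄. -/
def cartanF4 : Matrix (Fin 4) (Fin 4) ℤ :=
  !![2, -1, 0, 0;
     -1, 2, -2, 0;
     0, -1, 2, -1;
     0, 0, -1, 2]

/-- The simple reflection σᵢ as a ℤ-algebra endomorphism of ℤ[ω₁,…,ω₄]:
    σᵢ(ω_k) = ω_k for k ≠ i, σᵢ(ωᵢ) = ωᵢ − Σⱼ c_{ij} ωⱼ. -/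
def sigmaF4 (i : Fin 4) : F4W →ₐ[ℤ] F4W :=
  aeval fun k : Fin 4 =>
    if k = i then X i - ∑ j : Fin 4, C (cartanF4 i j) * X j else X k

/-- t₁=ω₄, t₂=ω₃−ω₄, t₃=ω₂−ω₃, t₄=ω₁−ω₂+ω₃, t₅=ω₁−ω₃+ω₄, t₆=ω₁−ω₄. -/
def tF4 : Fin 6 → F4W :=
  ![X 3, X 2 - X 3, X 1 - X 2, X 0 - X 1 + X 2, X 0 - X 2 + X 3, X 0 - X 3]

/-- c_r = e_r(t₁,…,t₆). -/
def cF4 (r : ℕ) : F4W :=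
  (Finset.powersetCard r (Finset.univ : Finset (Fin 6))).sum fun s => s.prod tF4

/-! Each of σ₂, σ₃, σ₄ acts on t₁,…,t₆ as a product of disjoint transpositions — (t₃ t₄),
(t₂ t₃)(t₄ t₅) and (t₁ t₂)(t₅ t₆) — which is a direct computation. Since c_r is the
elementary symmetric polynomial e_r evaluated at (t₁,…,t₆), any algebra endomorphism that
permutes the tₖ fixes it. -/

namespace MvPolynomial

variable {R A σ : Type*} [CommSemiring R] [CommSemiring A] [Algebra R A]

theorem IsSymmetric.map_aeval_of_comp_eq_comp_perm {φ : MvPolynomial σ R} (hφ : φ.IsSymmetric)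
    {f : A →ₐ[R] A} {t : σ → A} {π : Equiv.Perm σ} (h : ⇑f ∘ t = t ∘ ⇑π) :
    f (aeval t φ) = aeval t φ := by
  rw [comp_aeval_apply, ← Function.comp_def, h, ← aeval_rename, hφ π]

end MvPolynomial

theorem Set.image_range_eq_range_of_comp_eq_comp_perm {α ι : Type*} {f : α → α} {t : ι → α}
    {π : Equiv.Perm ι} (h : f ∘ t = t ∘ ⇑π) : f '' Set.range t = Set.range t := by
  rw [← Set.range_comp, h, Set.range_comp, π.surjective.range_eq, Set.image_univ]

theorem cF4_eq_aeval_esymm (r : ℕ) : cF4 r = aeval tF4 (esymm (Fin 6) ℤ r) := by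
  simp only [cF4, esymm, map_sum, map_prod, aeval_X]

@[simp]
theorem sigmaF4_X_of_ne {i k : Fin 4} (h : k ≠ i) : sigmaF4 i (X k) = X k := by
  simp [sigmaF4, h]

@[simp]
theorem sigmaF4_X_self (i : Fin 4) :
    sigmaF4 i (X i) = X i - ∑ j : Fin 4, C (cartanF4 i j) * X j := by
  simp [sigmaF4]

-- Indices are zero-based: `Equiv.swap 2 3` exchanges t₃ and t₄.
theorem sigmaF4_one_comp_tF4 : ⇑(sigmaF4 1) ∘ tF4 = tF4 ∘ ⇑(Equiv.swap 2 3) := by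
  funext k
  fin_cases k <;>
    simp [tF4, Fin.sum_univ_four, cartanF4, Equiv.swap_apply_def] <;> ring

theorem sigmaF4_two_comp_tF4 :
    ⇑(sigmaF4 2) ∘ tF4 = tF4 ∘ ⇑(Equiv.swap 1 2 * Equiv.swap 3 4 : Equiv.Perm (Fin 6)) := by
  funext k
  fin_cases k <;>
    simp [tF4, Fin.sum_univ_four, cartanF4, Equiv.swap_apply_def] <;> ring

theorem sigmaF4_three_comp_tF4 :
    ⇑(sigmaF4 3) ∘ tF4 = tF4 ∘ ⇑(Equiv.swap 0 1 * Equiv.swap 4 5 : Equiv.Perm (Fin 6)) := by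
  funext k
  fin_cases k <;>
    simp [tF4, Fin.sum_univ_four, cartanF4, Equiv.swap_apply_def] <;> ring

theorem exists_perm_sigmaF4_comp_tF4 {i : Fin 4} (hi : i ≠ 0) :
    ∃ π : Equiv.Perm (Fin 6), ⇑(sigmaF4 i) ∘ tF4 = tF4 ∘ ⇑π := by
  fin_cases i
  · exact absurd rfl hi
  · exact ⟨_, sigmaF4_one_comp_tF4⟩
  · exact ⟨_, sigmaF4_two_comp_tF4⟩
  · exact ⟨_, sigmaF4_three_comp_tF4⟩

/-- Lemma 3 for G = F₄: each of σ₂, σ₃, σ₄ (i.e. σᵢ for i ≠ 1, zero-based i ≠ 0)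
    permutes the set {t₁,…,t₆}; in particular σᵢ(c_r) = c_r for 1 ≤ r ≤ 6. -/
theorem sigmaF4_permutes_t_and_fixes_c :
    ∀ i : Fin 4, i ≠ 0 →
      (⇑(sigmaF4 i) '' Set.range tF4 = Set.range tF4) ∧
      (∀ r : ℕ, 1 ≤ r → r ≤ 6 → sigmaF4 i (cF4 r) = cF4 r) := by
  intro i hi
  obtain ⟨π, hπ⟩ := exists_perm_sigmaF4_comp_tF4 hi
  refine ⟨Set.image_range_eq_range_of_comp_eq_comp_perm hπ, fun r _ _ => ?_⟩
  rw [cF4_eq_aeval_esymm]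
  exact (esymm_isSymmetric (Fin 6) ℤ r).map_aeval_of_comp_eq_comp_perm hπ
end
end

section
/- Let ℤ[ω₁,…,ω₇] be the polynomial ring over ℤ and let C = (c_{ij}) be the Cartan matrix of E₇: c_{ii} = 2, c_{ij} = −1 if {i,j} is one of the edges {1,3},{3,4},{4,5},{5,6},{6,7},{2,4} of the E₇ Dynkin diagram, and c_{ij} = 0 otherwise. For 1 ≤ i ≤ 7 let σ_i be the ℤ-algebra endomorphism of ℤ[ω₁,…,ω₇] determined by σ_i(ω_k) = ω_k for k ≠ i and σ_i(ω_i) = ω_i − Σ_{j=1}^{7} c_{ij}ω_j. Then each σ_i with i ≠ 2 permutes the set {t₁,…,t₇}; in particular σ_i(c_r) = c_r for every i ∈ {1,3,4,5,6,7} and 1 ≤ r ≤ 7. -/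
/-!
For a linear form `x`, `σᵢ x = x − ⟨x, ωᵢ⟩ αᵢ`, where `αᵢ = Σⱼ c_{ij} ωⱼ` is the `i`-th simple root
and `⟨x, ωᵢ⟩` the coefficient of `ωᵢ` in `x`. For `i ≠ 2` the root `αᵢ` is a difference
`t_a − t_b` of two consecutive forms, `ωᵢ` occurs in `t_a` with coefficient `1`, in `t_b` with
coefficient `−1` and in no other `t_k`; so `σᵢ` swaps `t_a` and `t_b` and fixes the rest.
The `c_r` are the values of the elementary symmetric polynomials at `(t₁, …, t₇)`, hence are
fixed by any algebra map that permutes the `tₖ`.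
-/

open MvPolynomial

noncomputable section

/-- ℤ[ω₁,…,ω₇], with ωᵢ = X (i−1). -/
abbrev E7W : Type := MvPolynomial (Fin 7) ℤ

/-- The Cartan matrix of E₇
    (edges {1,3},{3,4},{4,5},{5,6},{6,7},{2,4}, 1-based). -/
def cartanE7 : Matrix (Fin 7) (Fin 7) ℤ :=
  !![2, 0, -1, 0, 0, 0, 0;
     0, 2, 0, -1, 0, 0, 0;
     -1, 0, 2, -1, 0, 0, 0;
     0, -1, -1, 2, -1, 0, 0;
     0, 0, 0, -1, 2, -1, 0;
     0, 0, 0, 0, -1, 2, -1;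
     0, 0, 0, 0, 0, -1, 2]

/-- The simple reflection σᵢ as a ℤ-algebra endomorphism of ℤ[ω₁,…,ω₇]:
    σᵢ(ω_k) = ω_k for k ≠ i, σᵢ(ωᵢ) = ωᵢ − Σⱼ c_{ij} ωⱼ. -/
def sigmaE7 (i : Fin 7) : E7W →ₐ[ℤ] E7W :=
  aeval fun k : Fin 7 =>
    if k = i then X i - ∑ j : Fin 7, C (cartanE7 i j) * X j else X k

/-- t₁=ω₇, t₂=ω₆−ω₇, t₃=ω₅−ω₆, t₄=ω₄−ω₅, t₅=ω₃−ω₄+ω₂, t₆=ω₁−ω₃+ω₂, t₇=−ω₁+ω₂. -/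
def tE7 : Fin 7 → E7W :=
  ![X 6, X 5 - X 6, X 4 - X 5, X 3 - X 4, X 2 - X 3 + X 1, X 0 - X 2 + X 1,
    -X 0 + X 1]

/-- c_r = e_r(t₁,…,t₇). -/
def cE7 (r : ℕ) : E7W :=
  (Finset.powersetCard r (Finset.univ : Finset (Fin 7))).sum fun s => s.prod tE7

open Equiv

theorem MvPolynomial.IsSymmetric.aeval_comp_perm {σ R S : Type*} [CommSemiring R]
    [CommSemiring S] [Algebra R S] {p : MvPolynomial σ R} (hp : p.IsSymmetric) (f : σ → S)
    (π : Perm σ) : aeval (f ∘ π) p = aeval f p := by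
  rw [← aeval_rename, hp π]

theorem MvPolynomial.IsSymmetric.algHom_aeval_eq_of_comp_eq_comp_perm {σ R S : Type*}
    [CommSemiring R] [CommSemiring S] [Algebra R S] {p : MvPolynomial σ R} (hp : p.IsSymmetric)
    (φ : S →ₐ[R] S) {f : σ → S} {π : Perm σ} (h : φ ∘ f = f ∘ π) :
    φ (aeval f p) = aeval f p := by
  rw [← AlgHom.comp_apply, comp_aeval, ← hp.aeval_comp_perm f π]
  exact congrArg (aeval · p) h

theorem cE7_eq_aeval_esymm (r : ℕ) : cE7 r = aeval tE7 (esymm (Fin 7) ℤ r) := by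
  simp [cE7, esymm, map_sum, map_prod]

/-- The permutation of the `tₖ` induced by `σᵢ`, zero-based; the entry at `1` (for `σ₂`, which
does not permute the `tₖ`) is a placeholder. -/
def tPermE7 : Fin 7 → Perm (Fin 7) :=
  ![swap 5 6, 1, swap 4 5, swap 3 4, swap 2 3, swap 1 2, swap 0 1]

theorem sigmaE7_comp_tE7 {i : Fin 7} (hi : i ≠ 1) : sigmaE7 i ∘ tE7 = tE7 ∘ tPermE7 i := by
  funext k
  revert hi
  fin_cases i <;> fin_cases k <;>
    simp [sigmaE7, tE7, tPermE7, cartanE7, Fin.sum_univ_seven, swap_apply_def] <;> ring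

/-- Lemma 3 for G = E₇: each σᵢ with i ≠ 2 (zero-based i ≠ 1) permutes the set
    {t₁,…,t₇}; in particular σᵢ(c_r) = c_r for 1 ≤ r ≤ 7. -/
theorem sigmaE7_permutes_t_and_fixes_c :
    ∀ i : Fin 7, i ≠ 1 →
      (⇑(sigmaE7 i) '' Set.range tE7 = Set.range tE7) ∧
      (∀ r : ℕ, 1 ≤ r → r ≤ 7 → sigmaE7 i (cE7 r) = cE7 r) := by
  intro i hi
  have hperm := sigmaE7_comp_tE7 hi
  refine ⟨?_, fun r _ _ => ?_⟩
  · rw [← Set.range_comp, hperm, EquivLike.range_comp]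
  · rw [cE7_eq_aeval_esymm]
    exact (esymm_isSymmetric (Fin 7) ℤ r).algHom_aeval_eq_of_comp_eq_comp_perm _ hperm
end
end
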